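/- arXiv:1107.0473 — 2 statements merged into one kernel-verified Lean document; each statement's English description precedes it below -/
import Mathlib

section
/- Let p ∈ ℝ³ with ‖p‖ < 1. Let S > 0 and let γ(s) = (t(s), x(s)), s ∈ [0,S], be a future-directed causal C¹ curve in Minkowski spacetime with t(0) = 0 and x(0) = p, and suppose γ remains in the cone C = {(t,x) ∈ ℝ × ℝ³ : 0 ≤ t and ‖x‖ < 1 − t}. Then the Lorentzian length of γ satisfies ∫₀^S √(t'(s)² − ‖x'(s)‖²) ds ≤ √(1 − ‖p‖²). -/
/-!
The function `τ(t, x) = √((1 - t)² - ‖x‖²)` is the Lorentzian time separation of `(t, x)` from the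
tip `(1, 0)` of the cone. Along a future-directed causal curve inside the cone, the reverse
Cauchy–Schwarz inequality for causal vectors shows that `τ` decreases at least as fast as proper
time accumulates, so the proper time elapsed is at most `τ(0, p) - τ(end) ≤ √(1 - ‖p‖²)`.
-/

open Real Set MeasureTheory intervalIntegral
open scoped RealInnerProductSpace

theorem sqrt_sq_sub_sq_mul_sqrt_sq_sub_sq_le {a b c d : ℝ} (hb : 0 ≤ b) (hba : b ≤ a)
    (hd : 0 ≤ d) (hdc : d ≤ c) :
    √(a ^ 2 - b ^ 2) * √(c ^ 2 - d ^ 2) ≤ a * c - b * d := by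
  rw [← sqrt_mul (by nlinarith)]
  apply sqrt_le_iff.mpr ⟨by nlinarith, by nlinarith [sq_nonneg (a * d - b * c)]⟩

variable {E : Type*} [NormedAddCommGroup E]

noncomputable def timeToTip (t : ℝ) (x : E) : ℝ := √((1 - t) ^ 2 - ‖x‖ ^ 2)

theorem timeToTip_pos {t : ℝ} {x : E} (h : ‖x‖ < 1 - t) : 0 < timeToTip t x :=
  sqrt_pos.mpr (by nlinarith [norm_nonneg x])

variable [InnerProductSpace ℝ E]

/-- Reverse Cauchy–Schwarz inequality for future-directed causal vectors `(a, v)`, `(c, w)` of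
Minkowski space `ℝ × E`. -/
theorem sqrt_sq_sub_norm_sq_mul_le_sub_inner {a c : ℝ} {v w : E} (hv : ‖v‖ ≤ a) (hw : ‖w‖ ≤ c) :
    √(a ^ 2 - ‖v‖ ^ 2) * √(c ^ 2 - ‖w‖ ^ 2) ≤ a * c - ⟪v, w⟫ :=
  (sqrt_sq_sub_sq_mul_sqrt_sq_sub_sq_le (norm_nonneg v) hv (norm_nonneg w) hw).trans <| by
    linarith [real_inner_le_norm v w]

theorem HasDerivAt.timeToTip {t : ℝ → ℝ} {x : ℝ → E} {t' : ℝ} {x' : E} {s : ℝ}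
    (ht : HasDerivAt t t' s) (hx : HasDerivAt x x' s) (hcone : ‖x s‖ < 1 - t s) :
    HasDerivAt (fun s ↦ timeToTip (t s) (x s))
      (-(((1 - t s) * t' + ⟪x s, x'⟫) / timeToTip (t s) (x s))) s := by
  have hpos := timeToTip_pos hcone
  have hsq : HasDerivAt (fun s ↦ (1 - t s) ^ 2 - ‖x s‖ ^ 2)
      (2 * (1 - t s) * -t' - 2 * ⟪x s, x'⟫) s := by
    simpa using ((hasDerivAt_const s 1).fun_sub ht).fun_pow 2 |>.fun_sub hx.norm_sq
  refine (hsq.sqrt (sqrt_pos.mp hpos).ne').congr_deriv ?_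
  rw [← _root_.timeToTip]
  field_simp
  ring

theorem sqrt_sq_sub_norm_sq_le_div_timeToTip {t t' : ℝ} {x x' : E}
    (hcone : ‖x‖ < 1 - t) (hcausal : ‖x'‖ ≤ t') :
    √(t' ^ 2 - ‖x'‖ ^ 2) ≤ ((1 - t) * t' + ⟪x, x'⟫) / timeToTip t x := by
  rw [le_div_iff₀ (timeToTip_pos hcone), mul_comm, timeToTip, ← norm_neg x]
  simpa [inner_neg_left] using
    sqrt_sq_sub_norm_sq_mul_le_sub_inner (v := -x) (norm_neg x ▸ hcone.le) hcausal

theorem integral_sqrt_le_timeToTip_sub {t t' : ℝ → ℝ} {x x' : ℝ → E} {a b : ℝ} (hab : a ≤ b)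
    (ht : ∀ s ∈ Icc a b, HasDerivAt t (t' s) s) (hx : ∀ s ∈ Icc a b, HasDerivAt x (x' s) s)
    (hint : IntegrableOn (fun s ↦ √(t' s ^ 2 - ‖x' s‖ ^ 2)) (Icc a b))
    (hcausal : ∀ s ∈ Ioo a b, ‖x' s‖ ≤ t' s) (hcone : ∀ s ∈ Icc a b, ‖x s‖ < 1 - t s) :
    ∫ s in a..b, √(t' s ^ 2 - ‖x' s‖ ^ 2)
      ≤ timeToTip (t a) (x a) - timeToTip (t b) (x b) := by
  have hderiv : ∀ s ∈ Icc a b, HasDerivAt (fun s ↦ -timeToTip (t s) (x s))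
      (((1 - t s) * t' s + ⟪x s, x' s⟫) / timeToTip (t s) (x s)) s := fun s hs ↦ by
    simpa only [neg_neg] using ((ht s hs).timeToTip (hx s hs) (hcone s hs)).fun_neg
  have := integral_le_sub_of_hasDeriv_right_of_le hab
    (fun s hs ↦ (hderiv s hs).continuousAt.continuousWithinAt)
    (fun s hs ↦ (hderiv s (Ioo_subset_Icc_self hs)).hasDerivWithinAt) hint
    (fun s hs ↦ sqrt_sq_sub_norm_sq_le_div_timeToTip (hcone s (Ioo_subset_Icc_self hs))
      (hcausal s hs))
  linarith

theorem lorentzian_length_le_of_stays_in_cone_general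
    (p : EuclideanSpace ℝ (Fin 3))
    (S : ℝ) (hS : 0 < S)
    (t : ℝ → ℝ) (x : ℝ → EuclideanSpace ℝ (Fin 3))
    (t' : ℝ → ℝ) (x' : ℝ → EuclideanSpace ℝ (Fin 3))
    (ht : ∀ s ∈ Set.Icc 0 S, HasDerivAt t (t' s) s)
    (hx : ∀ s ∈ Set.Icc 0 S, HasDerivAt x (x' s) s)
    (ht'cont : ContinuousOn t' (Set.Icc 0 S))
    (hx'cont : ContinuousOn x' (Set.Icc 0 S))
    (ht0 : t 0 = 0) (hx0 : x 0 = p)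
    (hcausal : ∀ s ∈ Set.Icc 0 S, 0 < t' s ∧ ‖x' s‖ ≤ t' s)
    (hcone : ∀ s ∈ Set.Icc 0 S, 0 ≤ t s ∧ ‖x s‖ < 1 - t s) :
    ∫ s in (0:ℝ)..S, Real.sqrt ((t' s) ^ 2 - ‖x' s‖ ^ 2)
      ≤ Real.sqrt (1 - ‖p‖ ^ 2) := by
  have hint : IntegrableOn (fun s ↦ √(t' s ^ 2 - ‖x' s‖ ^ 2)) (Icc 0 S) :=
    ((ht'cont.pow 2).sub (hx'cont.norm.pow 2)).sqrt.integrableOn_compact isCompact_Icc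
  calc ∫ s in (0:ℝ)..S, √(t' s ^ 2 - ‖x' s‖ ^ 2)
      ≤ timeToTip (t 0) (x 0) - timeToTip (t S) (x S) :=
        integral_sqrt_le_timeToTip_sub hS.le ht hx hint
          (fun s hs ↦ (hcausal s (Ioo_subset_Icc_self hs)).2) fun s hs ↦ (hcone s hs).2
    _ ≤ timeToTip (t 0) (x 0) := sub_le_self _ (sqrt_nonneg _)
    _ = √(1 - ‖p‖ ^ 2) := by simp [timeToTip, ht0, hx0]

/-- Let `p ∈ ℝ³` with `‖p‖ < 1`. Any future-directed causal `C¹` curve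
`γ(s) = (t s, x s)`, `s ∈ [0,S]`, in Minkowski spacetime with `t 0 = 0`, `x 0 = p`, which remains
in the cone `C = {(t,x) : 0 ≤ t ∧ ‖x‖ < 1 - t}`, has Lorentzian length
`∫₀^S √(t'(s)² - ‖x'(s)‖²) ds ≤ √(1 - ‖p‖²)`. -/
theorem lorentzian_length_le_of_stays_in_cone
    (p : EuclideanSpace ℝ (Fin 3)) (hp : ‖p‖ < 1)
    (S : ℝ) (hS : 0 < S)
    (t : ℝ → ℝ) (x : ℝ → EuclideanSpace ℝ (Fin 3))
    (t' : ℝ → ℝ) (x' : ℝ → EuclideanSpace ℝ (Fin 3))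
    (ht : ∀ s ∈ Set.Icc 0 S, HasDerivAt t (t' s) s)
    (hx : ∀ s ∈ Set.Icc 0 S, HasDerivAt x (x' s) s)
    (ht'cont : ContinuousOn t' (Set.Icc 0 S))
    (hx'cont : ContinuousOn x' (Set.Icc 0 S))
    (ht0 : t 0 = 0) (hx0 : x 0 = p)
    (hcausal : ∀ s ∈ Set.Icc 0 S, 0 < t' s ∧ ‖x' s‖ ≤ t' s)
    (hcone : ∀ s ∈ Set.Icc 0 S, 0 ≤ t s ∧ ‖x s‖ < 1 - t s) :
    ∫ s in (0:ℝ)..S, Real.sqrt ((t' s) ^ 2 - ‖x' s‖ ^ 2)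
      ≤ Real.sqrt (1 - ‖p‖ ^ 2) :=
  lorentzian_length_le_of_stays_in_cone_general p S hS t x t' x' ht hx ht'cont hx'cont ht0 hx0
    hcausal hcone
end

section
/- Let T > 0, let g : [0,T) → Sym(3,ℝ) be a differentiable family of symmetric 3×3 real matrices with g'(t) = −2·M(t), where each M(t) is symmetric, and suppose there is an integrable function f : [0,T) → [0,∞) with ∫₀ᵀ f(t) dt ≤ Λ such that |vᵀ M(t) v| ≤ f(t)·(vᵀ g(t) v) for all t ∈ [0,T) and v ∈ ℝ³. If for some C ≥ 1 one has C⁻¹‖v‖² ≤ vᵀ g(0) v ≤ C‖v‖² for all v ∈ ℝ³, then for all t ∈ [0,T) and all v ∈ ℝ³: (C·e^{2Λ})⁻¹‖v‖² ≤ vᵀ g(t) v ≤ C·e^{2Λ}‖v‖². -/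
/-!
Fix `v` and set `φ(t) = vᵀ g(t) v`, so that `φ' = -2 vᵀ M v` and `|φ'| ≤ 2 f φ`. As long as
`φ > 0`, this says that `log φ` has derivative bounded by `2 f`, hence `log φ` moves by at most
`2 ∫ f ≤ 2Λ`. Since `f` is only integrable, this is done with the inequality form of the
fundamental theorem of calculus, which needs no integrability of the derivative. The resulting
lower bound `φ ≥ φ(0) e^{-2Λ}` keeps `φ` away from `0`, so `φ` stays positive on all of `[0, T)`.
-/

open Set MeasureTheory Real
open scoped Matrix

theorem hasDerivWithinAt_dotProduct_mulVec {𝕜 m n : Type*} [NontriviallyNormedField 𝕜]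
    [Fintype m] [Fintype n] {A : 𝕜 → Matrix m n 𝕜} {A' : Matrix m n 𝕜} {s : Set 𝕜} {t : 𝕜}
    (w : m → 𝕜) (v : n → 𝕜) (hA : ∀ i j, HasDerivWithinAt (fun u => A u i j) (A' i j) s t) :
    HasDerivWithinAt (fun u => w ⬝ᵥ A u *ᵥ v) (w ⬝ᵥ A' *ᵥ v) s t := by
  simp only [dotProduct, Matrix.mulVec]
  exact HasDerivWithinAt.fun_sum fun i _ =>
    (HasDerivWithinAt.fun_sum fun j _ => (hA i j).mul_const (v j)).const_mul (w i)

section LogDerivativeBound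

variable {φ φ' h : ℝ → ℝ} {a b : ℝ}

theorem abs_log_sub_log_le_integral_of_abs_deriv_le (hab : a ≤ b)
    (hφ : ContinuousOn φ (Icc a b)) (hφ' : ∀ x ∈ Ioo a b, HasDerivWithinAt φ (φ' x) (Ioi x) x)
    (hpos : ∀ x ∈ Icc a b, 0 < φ x) (hh : IntegrableOn h (Icc a b))
    (hbound : ∀ x ∈ Ioo a b, |φ' x| ≤ h x * φ x) :
    |log (φ b) - log (φ a)| ≤ ∫ x in a..b, h x := by
  have hlog : ∀ x ∈ Ioo a b, HasDerivWithinAt (fun y => log (φ y)) (φ' x / φ x) (Ioi x) x :=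
    fun x hx => (hφ' x hx).log (hpos x (Ioo_subset_Icc_self hx)).ne'
  have hlog_cont : ContinuousOn (fun y => log (φ y)) (Icc a b) :=
    hφ.log fun x hx => (hpos x hx).ne'
  have hratio : ∀ x ∈ Ioo a b, |φ' x / φ x| ≤ h x := by
    intro x hx
    have hφx := hpos x (Ioo_subset_Icc_self hx)
    rw [abs_div, abs_of_pos hφx, div_le_iff₀ hφx]
    exact hbound x hx
  rw [abs_sub_le_iff]
  constructor
  · exact intervalIntegral.sub_le_integral_of_hasDeriv_right_of_le hab hlog_cont hlog hh
      fun x hx => (le_abs_self _).trans (hratio x hx)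
  · have := intervalIntegral.sub_le_integral_of_hasDeriv_right_of_le hab hlog_cont.neg
      (fun x hx => (hlog x hx).neg) hh fun x hx => (neg_le_abs _).trans (hratio x hx)
    simp only [Pi.neg_apply] at this
    linarith

theorem exp_integral_bounds_of_abs_deriv_le (hab : a ≤ b)
    (hφ : ContinuousOn φ (Icc a b)) (hφ' : ∀ x ∈ Ioo a b, HasDerivWithinAt φ (φ' x) (Ioi x) x)
    (hpos : ∀ x ∈ Icc a b, 0 < φ x) (hh : IntegrableOn h (Icc a b))
    (hbound : ∀ x ∈ Ioo a b, |φ' x| ≤ h x * φ x) :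
    φ a * exp (-∫ x in a..b, h x) ≤ φ b ∧ φ b ≤ φ a * exp (∫ x in a..b, h x) := by
  have hlog := abs_le.mp
    (abs_log_sub_log_le_integral_of_abs_deriv_le hab hφ hφ' hpos hh hbound)
  have hφa := hpos a (left_mem_Icc.mpr hab)
  have hφb := hpos b (right_mem_Icc.mpr hab)
  rw [← exp_log hφa, ← exp_log hφb, ← exp_add, ← exp_add]
  exact ⟨exp_le_exp.mpr (by linarith), exp_le_exp.mpr (by linarith)⟩

theorem pos_of_abs_deriv_le (hab : a ≤ b)
    (hφ : ContinuousOn φ (Icc a b)) (hφ' : ∀ x ∈ Ioo a b, HasDerivWithinAt φ (φ' x) (Ioi x) x)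
    (hh : IntegrableOn h (Icc a b)) (hh₀ : ∀ x ∈ Icc a b, 0 ≤ h x)
    (hbound : ∀ x ∈ Ioo a b, |φ' x| ≤ h x * φ x) (ha : 0 < φ a) :
    ∀ x ∈ Icc a b, 0 < φ x := by
  by_contra! hneg
  obtain ⟨x₁, hx₁, hφx₁⟩ := hneg
  set Z := Icc a b ∩ φ ⁻¹' Iic 0
  have hbdd : BddBelow Z := ⟨a, fun x hx => hx.1.1⟩
  have ht₀ : sInf Z ∈ Z :=
    (hφ.preimage_isClosed_of_isClosed isClosed_Icc isClosed_Iic).csInf_mem ⟨x₁, hx₁, hφx₁⟩ hbdd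
  set t₀ := sInf Z
  have hφt₀ : φ t₀ ≤ 0 := ht₀.2
  have hat₀ : a < t₀ := ht₀.1.1.lt_of_ne fun heq => by rw [← heq] at hφt₀; linarith
  have hpos_before : ∀ x ∈ Icc a b, x < t₀ → 0 < φ x := fun x hx hlt =>
    lt_of_not_ge fun hle => (csInf_le hbdd ⟨hx, hle⟩).not_gt hlt
  -- On `[a, t₀)` the lower bound applies, and it is uniform since `h ≥ 0`.
  have hlower : ∀ s ∈ Ico a t₀, φ a * exp (-∫ x in a..b, h x) ≤ φ s := by
    intro s hs
    have hsb : s ≤ b := hs.2.le.trans ht₀.1.2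
    have hsub : Icc a s ⊆ Icc a b := Icc_subset_Icc_right hsb
    refine le_trans ?_ (exp_integral_bounds_of_abs_deriv_le hs.1 (hφ.mono hsub)
      (fun x hx => hφ' x ⟨hx.1, hx.2.trans_le hsb⟩)
      (fun x hx => hpos_before x (hsub hx) (hx.2.trans_lt hs.2)) (hh.mono_set hsub)
      (fun x hx => hbound x ⟨hx.1, hx.2.trans_le hsb⟩)).1
    gcongr
    refine intervalIntegral.integral_mono_interval le_rfl hs.1 hsb ?_
      ((intervalIntegrable_iff_integrableOn_Icc_of_le hab).mpr hh)
    filter_upwards [ae_restrict_mem measurableSet_Ioc] with x hx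
    exact hh₀ x (Ioc_subset_Icc_self hx)
  have hlower_t₀ : φ a * exp (-∫ x in a..b, h x) ≤ φ t₀ :=
    ContinuousWithinAt.closure_le (by rw [closure_Ico hat₀.ne]; exact right_mem_Icc.mpr hat₀.le)
      continuousWithinAt_const
      ((hφ t₀ ht₀.1).mono (Ico_subset_Icc_self.trans (Icc_subset_Icc_right ht₀.1.2))) hlower
  have : 0 < φ a * exp (-∫ x in a..b, h x) := by positivity
  linarith

theorem exp_integral_bounds_of_abs_deriv_le_Ico {T t : ℝ} (ht : t ∈ Ico a T)
    (hφ' : ∀ x ∈ Ico a T, HasDerivWithinAt φ (φ' x) (Ico a T) x)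
    (hh : IntegrableOn h (Ico a T)) (hh₀ : ∀ x ∈ Ico a T, 0 ≤ h x)
    (hbound : ∀ x ∈ Ico a T, |φ' x| ≤ h x * φ x) (ha : 0 < φ a) :
    φ a * exp (-∫ x in Ico a T, h x) ≤ φ t ∧ φ t ≤ φ a * exp (∫ x in Ico a T, h x) := by
  have hsub : Icc a t ⊆ Ico a T := Icc_subset_Ico_right ht.2
  have hφ_cont : ContinuousOn φ (Icc a t) := fun x hx =>
    (hφ' x (hsub hx)).continuousWithinAt.mono hsub
  have hφ'_right : ∀ x ∈ Ioo a t, HasDerivWithinAt φ (φ' x) (Ioi x) x := fun x hx =>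
    (hφ' x (hsub (Ioo_subset_Icc_self hx))).mono_of_mem_nhdsWithin
      (Filter.mem_of_superset (Ico_mem_nhdsGT (hx.2.trans ht.2)) (Ico_subset_Ico_left hx.1.le))
  have hh_t : IntegrableOn h (Icc a t) := hh.mono_set hsub
  have hbound_t : ∀ x ∈ Ioo a t, |φ' x| ≤ h x * φ x := fun x hx =>
    hbound x (hsub (Ioo_subset_Icc_self hx))
  have hpos := pos_of_abs_deriv_le ht.1 hφ_cont hφ'_right hh_t (fun x hx => hh₀ x (hsub hx))
    hbound_t ha
  have hint : ∫ x in a..t, h x ≤ ∫ x in Ico a T, h x := by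
    rw [intervalIntegral.integral_of_le ht.1]
    exact setIntegral_mono_set hh (ae_restrict_of_forall_mem measurableSet_Ico hh₀)
      (Ioc_subset_Icc_self.trans hsub).eventuallyLE
  obtain ⟨hlower, hupper⟩ :=
    exp_integral_bounds_of_abs_deriv_le ht.1 hφ_cont hφ'_right hpos hh_t hbound_t
  exact ⟨le_trans (by gcongr) hlower, hupper.trans (by gcongr)⟩

end LogDerivativeBound

theorem ellipticity_propagation_general
    (T Λ C : ℝ) (hC : 1 ≤ C)
    (g M : ℝ → Matrix (Fin 3) (Fin 3) ℝ)
    (f : ℝ → ℝ)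
    (hderiv : ∀ t ∈ Set.Ico (0:ℝ) T, ∀ i j,
      HasDerivWithinAt (fun u => g u i j) (-2 * M t i j) (Set.Ico (0:ℝ) T) t)
    (hf0 : ∀ t ∈ Set.Ico (0:ℝ) T, 0 ≤ f t)
    (hfint : MeasureTheory.IntegrableOn f (Set.Ico (0:ℝ) T))
    (hfΛ : ∫ t in Set.Ico (0:ℝ) T, f t ≤ Λ)
    (hbound : ∀ t ∈ Set.Ico (0:ℝ) T, ∀ v : Fin 3 → ℝ,
      |dotProduct v ((M t).mulVec v)| ≤ f t * dotProduct v ((g t).mulVec v))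
    (hg0lower : ∀ v : Fin 3 → ℝ, C⁻¹ * (∑ i, v i ^ 2) ≤ dotProduct v ((g 0).mulVec v))
    (hg0upper : ∀ v : Fin 3 → ℝ, dotProduct v ((g 0).mulVec v) ≤ C * (∑ i, v i ^ 2)) :
    ∀ t ∈ Set.Ico (0:ℝ) T, ∀ v : Fin 3 → ℝ,
      (C * Real.exp (2 * Λ))⁻¹ * (∑ i, v i ^ 2) ≤ dotProduct v ((g t).mulVec v) ∧
      dotProduct v ((g t).mulVec v) ≤ C * Real.exp (2 * Λ) * (∑ i, v i ^ 2) := by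
  intro t ht v
  obtain rfl | hv := eq_or_ne v 0
  · simp
  have hφ' : ∀ s ∈ Ico 0 T,
      HasDerivWithinAt (fun u => v ⬝ᵥ g u *ᵥ v) (-2 * (v ⬝ᵥ M s *ᵥ v)) (Ico 0 T) s := by
    intro s hs
    have := hasDerivWithinAt_dotProduct_mulVec (A' := (-2 : ℝ) • M s) v v (hderiv s hs)
    rwa [Matrix.smul_mulVec, dotProduct_smul, smul_eq_mul] at this
  have hderiv_bound : ∀ s ∈ Ico 0 T, |-2 * (v ⬝ᵥ M s *ᵥ v)| ≤ 2 * f s * (v ⬝ᵥ g s *ᵥ v) := by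
    intro s hs
    rw [abs_mul, abs_neg, abs_two, mul_assoc]
    gcongr
    exact hbound s hs v
  have hnorm : 0 < ∑ i, v i ^ 2 := by
    obtain ⟨i, hi⟩ := Function.ne_iff.mp hv
    exact Finset.sum_pos' (fun j _ => sq_nonneg (v j)) ⟨i, Finset.mem_univ i, sq_pos_of_ne_zero hi⟩
  have hC₀ : 0 < C := zero_lt_one.trans_le hC
  have hφ₀ : 0 < v ⬝ᵥ g 0 *ᵥ v := (mul_pos (inv_pos.mpr hC₀) hnorm).trans_le (hg0lower v)
  obtain ⟨hlower, hupper⟩ := exp_integral_bounds_of_abs_deriv_le_Ico ht hφ'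
    (hfint.const_mul 2) (fun s hs => mul_nonneg zero_le_two (hf0 s hs)) hderiv_bound hφ₀
  have hint : ∫ s in Ico 0 T, 2 * f s ≤ 2 * Λ := by
    rw [integral_const_mul]
    linarith
  constructor
  · calc (C * exp (2 * Λ))⁻¹ * ∑ i, v i ^ 2 = C⁻¹ * (∑ i, v i ^ 2) * exp (-(2 * Λ)) := by
          rw [mul_inv, Real.exp_neg]; ring
      _ ≤ (v ⬝ᵥ g 0 *ᵥ v) * exp (-∫ s in Ico 0 T, 2 * f s) := by gcongr; exact hg0lower v
      _ ≤ v ⬝ᵥ g t *ᵥ v := hlower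
  · calc v ⬝ᵥ g t *ᵥ v ≤ (v ⬝ᵥ g 0 *ᵥ v) * exp (∫ s in Ico 0 T, 2 * f s) := hupper
      _ ≤ C * (∑ i, v i ^ 2) * exp (2 * Λ) := by gcongr; exact hg0upper v
      _ = C * exp (2 * Λ) * ∑ i, v i ^ 2 := by ring

/-- Propagation of the uniform ellipticity assumption (G): if a differentiable
family `g : [0,T) → Sym(3,ℝ)` satisfies `g' = -2 M(t)` with `M(t)` symmetric, and
`|vᵀ M(t) v| ≤ f(t) · (vᵀ g(t) v)` for an integrable `f ≥ 0` with `∫₀ᵀ f ≤ Λ`, then the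
two-sided bound `C⁻¹‖v‖² ≤ vᵀ g(0) v ≤ C‖v‖²` propagates with constant `C·e^{2Λ}`. -/
theorem ellipticity_propagation
    (T Λ C : ℝ) (hT : 0 < T) (hC : 1 ≤ C)
    (g M : ℝ → Matrix (Fin 3) (Fin 3) ℝ)
    (f : ℝ → ℝ)
    (hgsymm : ∀ t ∈ Set.Ico (0:ℝ) T, (g t).IsSymm)
    (hMsymm : ∀ t ∈ Set.Ico (0:ℝ) T, (M t).IsSymm)
    (hderiv : ∀ t ∈ Set.Ico (0:ℝ) T, ∀ i j,
      HasDerivWithinAt (fun u => g u i j) (-2 * M t i j) (Set.Ico (0:ℝ) T) t)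
    (hf0 : ∀ t ∈ Set.Ico (0:ℝ) T, 0 ≤ f t)
    (hfint : MeasureTheory.IntegrableOn f (Set.Ico (0:ℝ) T))
    (hfΛ : ∫ t in Set.Ico (0:ℝ) T, f t ≤ Λ)
    (hbound : ∀ t ∈ Set.Ico (0:ℝ) T, ∀ v : Fin 3 → ℝ,
      |dotProduct v ((M t).mulVec v)| ≤ f t * dotProduct v ((g t).mulVec v))
    (hg0lower : ∀ v : Fin 3 → ℝ, C⁻¹ * (∑ i, v i ^ 2) ≤ dotProduct v ((g 0).mulVec v))
    (hg0upper : ∀ v : Fin 3 → ℝ, dotProduct v ((g 0).mulVec v) ≤ C * (∑ i, v i ^ 2)) :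
    ∀ t ∈ Set.Ico (0:ℝ) T, ∀ v : Fin 3 → ℝ,
      (C * Real.exp (2 * Λ))⁻¹ * (∑ i, v i ^ 2) ≤ dotProduct v ((g t).mulVec v) ∧
      dotProduct v ((g t).mulVec v) ≤ C * Real.exp (2 * Λ) * (∑ i, v i ^ 2) :=
  ellipticity_propagation_general T Λ C hC g M f hderiv hf0 hfint hfΛ hbound hg0lower hg0upper
end
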